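/- Let F be a q-srgi map that satisfies assumption (A), and suppose there exists x₀ ∈ X such that Colev_{<^l}(F, F(x₀)) is relatively compact. If F(X) is P-bounded, then l-SWEff(F) is nonempty. -/

import Mathlib

open Pointwise

/-- The Gerstewitz scalarization function `ψ^q_P(y) = sup {t : ℝ | y ∈ t • q + P}`. -/
noncomputable def psi {Y : Type*} [AddCommGroup Y] [Module ℝ Y] (P : Set Y) (q : Y) (y : Y) : ℝ :=
  sSup {t : ℝ | y - t • q ∈ P}

/-- Assumption (A): `ψ^q_P` attains its infimum on `F(x)` for all `x`. -/
def AssumptionA {X Y : Type*} [AddCommGroup Y] [Module ℝ Y]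
    (P : Set Y) (q : Y) (F : X → Set Y) : Prop :=
  ∀ x : X, ∃ z ∈ F x, ∀ w ∈ F x, psi P q z ≤ psi P q w

/-- The colevel set of `F` at height `B ⊆ Y`: `{x : F(x) ⊄ B + int P}`. -/
def ColevB {X Y : Type*} [AddCommGroup Y] [Module ℝ Y] [TopologicalSpace Y]
    (P : Set Y) (F : X → Set Y) (B : Set Y) : Set X :=
  {x | ¬ F x ⊆ B + interior P}

/-- The colevel set of `F` at height `λ • q`:
`Colev_{<ˡ}(F, λq) = {x ∈ X : F(x) ⊄ λ • q + int P}`. -/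
def Colev {X Y : Type*} [AddCommGroup Y] [Module ℝ Y] [TopologicalSpace Y]
    (P : Set Y) (q : Y) (F : X → Set Y) (lam : ℝ) : Set X :=
  {x | ¬ F x ⊆ {y : Y | y - lam • q ∈ interior P}}

/-- `M_F^q = sup {t ∈ ℝ : F(X) ⊆ t • q + P} ∈ ℝ ∪ {±∞}` (with `sup ∅ = -∞`). -/
noncomputable def Mq {X Y : Type*} [AddCommGroup Y] [Module ℝ Y]
    (P : Set Y) (q : Y) (F : X → Set Y) : EReal :=
  sSup ((fun t : ℝ => (t : EReal)) '' {t : ℝ | ∀ x : X, ∀ z ∈ F x, z - t • q ∈ P})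

/-- `F` is `q`-srgi: if `λ > M_F^q` and `x₀ ∉ Colev_{<ˡ}(F, λq)`, then there exist a
neighborhood `U` of `x₀` and a real `r > M_F^q` with `U ∩ Colev_{<ˡ}(F, rq) = ∅`. -/
def Srgi {X Y : Type*} [TopologicalSpace X] [AddCommGroup Y] [Module ℝ Y] [TopologicalSpace Y]
    (P : Set Y) (q : Y) (F : X → Set Y) : Prop :=
  ∀ lam : ℝ, Mq P q F < (lam : EReal) → ∀ x₀ : X, x₀ ∉ Colev P q F lam →
    ∃ U ∈ nhds x₀, ∃ r : ℝ, Mq P q F < (r : EReal) ∧ U ∩ Colev P q F r = ∅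

/-- `x̄` is a strict weakly `l`-efficient solution of (SOP). -/
def SWEff {X Y : Type*} [AddCommGroup Y] [Module ℝ Y] [TopologicalSpace Y]
    (P : Set Y) (F : X → Set Y) (xbar : X) : Prop :=
  ¬ ∃ x : X, x ≠ xbar ∧ F xbar ⊆ F x + interior P

/-- A set `A ⊆ Y` is `P`-bounded if for every neighborhood `U` of `0` there is `r > 0`
with `A ⊆ r • U + P`. -/
def PBounded {Y : Type*} [AddCommGroup Y] [Module ℝ Y] [TopologicalSpace Y]
    (P : Set Y) (A : Set Y) : Prop :=
  ∀ U ∈ nhds (0 : Y), ∃ r : ℝ, 0 < r ∧ A ⊆ r • U + P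

/-!
Under (A) each value `F x` is represented by the number `m x = min ψ(F x)`, and `ψ` turns the
set relations into inequalities: `x ∈ Colev(F, λq)` iff `m x ≤ λ`, `F a ⊆ F b + int P` forces
`m b < m a`, and `M_F^q < r` iff `m x < r` for some `x`. Hence a minimiser of `m` is strictly
weakly efficient. If `m` had no minimiser, srgi would give every point a neighbourhood on which
`m` stays above some level `r > inf m`; finitely many of them cover the compact closure of
`Colev(F, F(x₀))`, which contains every `x` with `m x < m x₀`, and a point where `m` lies below
`m x₀` and below all these finitely many levels contradicts the cover.
-/

open Set Filter Topology

section Algebra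

variable {Y : Type*} [AddCommGroup Y] [Module ℝ Y]

lemma Convex.add_mem_of_smul_mem {s : Set Y} (hs : Convex ℝ s)
    (hsmul : ∀ c : ℝ, 0 < c → ∀ y ∈ s, c • y ∈ s) {x y : Y} (hx : x ∈ s) (hy : y ∈ s) :
    x + y ∈ s := by
  convert hsmul 2 two_pos _ (hs hx hy (by norm_num : (0 : ℝ) ≤ 1 / 2)
    (by norm_num : (0 : ℝ) ≤ 1 / 2) (by norm_num)) using 1
  module

lemma ConvexCone.sub_smul_mem_of_lt {C : ConvexCone ℝ Y} {q y : Y} (hq : q ∈ C) {s t : ℝ}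
    (hy : y - t • q ∈ C) (hst : s < t) : y - s • q ∈ C := by
  convert C.add_mem hy (C.smul_mem (sub_pos.2 hst) hq) using 1
  module

end Algebra

section Topology

variable {Y : Type*} [AddCommGroup Y] [Module ℝ Y] [TopologicalSpace Y] {C : ConvexCone ℝ Y}

lemma IsOpen.exists_pos_smul_add_mem [ContinuousAdd Y] [ContinuousSMul ℝ Y] {U : Set Y}
    (hU : IsOpen U) {a : Y} (ha : a ∈ U) (y : Y) : ∃ c : ℝ, 0 < c ∧ c • y + a ∈ U := by
  have hcont : Continuous fun c : ℝ => c • y + a := by fun_prop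
  have hnear : ∀ᶠ c in 𝓝 (0 : ℝ), c • y + a ∈ U :=
    hcont.continuousAt.eventually_mem (hU.mem_nhds (by simpa using ha))
  obtain ⟨c, hcU, hc⟩ :=
    ((hnear.filter_mono (nhdsWithin_le_nhds (s := Ioi 0))).and self_mem_nhdsWithin).exists
  exact ⟨c, hc, hcU⟩

lemma ConvexCone.add_mem_interior [IsTopologicalAddGroup Y] {x y : Y} (hx : x ∈ interior C)
    (hy : y ∈ C) : x + y ∈ interior C :=
  interior_maximal (by rintro _ ⟨u, hu, v, hv, rfl⟩; exact C.add_mem (interior_subset hu) hv)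
    isOpen_interior.add_right (add_mem_add hx hy)

lemma ConvexCone.smul_mem_interior [ContinuousConstSMul ℝ Y] {c : ℝ} (hc : 0 < c) {x : Y}
    (hx : x ∈ interior C) : c • x ∈ interior C := by
  have hsub : c • (C : Set Y) ⊆ C := by rintro _ ⟨y, hy, rfl⟩; exact C.smul_mem hc hy
  have := interior_mono hsub
  rw [interior_smul₀ hc.ne'] at this
  exact this (smul_mem_smul_set hx)

variable [IsTopologicalAddGroup Y] [ContinuousSMul ℝ Y] {q : Y}

lemma ConvexCone.zero_notMem_interior (hCne : (C : Set Y) ≠ univ) : (0 : Y) ∉ interior C := by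
  refine fun h0 => hCne (eq_univ_of_forall fun y => ?_)
  obtain ⟨c, hc, hcy⟩ := isOpen_interior.exists_pos_smul_add_mem h0 y
  rw [add_zero] at hcy
  simpa [smul_smul, inv_mul_cancel₀ hc.ne'] using C.smul_mem (inv_pos.2 hc) (interior_subset hcy)

lemma ConvexCone.neg_notMem (hCne : (C : Set Y) ≠ univ) (hq : q ∈ interior C) : -q ∉ C :=
  fun h => zero_notMem_interior hCne (by simpa using add_mem_interior hq h)

lemma nonempty_setOf_sub_smul_mem (hq : q ∈ interior C) (y : Y) :
    {t : ℝ | y - t • q ∈ C}.Nonempty := by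
  obtain ⟨c, hc, hcy⟩ := isOpen_interior.exists_pos_smul_add_mem hq y
  refine ⟨-c⁻¹, show y - (-c⁻¹) • q ∈ C from ?_⟩
  convert C.smul_mem (inv_pos.2 hc) (interior_subset hcy) using 1
  simp only [smul_add, smul_smul, inv_mul_cancel₀ hc.ne', one_smul]
  module

lemma bddAbove_setOf_sub_smul_mem (hC : IsClosed (C : Set Y)) (hCne : (C : Set Y) ≠ univ)
    (hq : q ∈ interior C) (y : Y) : BddAbove {t : ℝ | y - t • q ∈ C} := by
  -- `Cᶜ` is an open neighbourhood of `-q`, so `c • y - q ∉ C` for some `c > 0`; then `c⁻¹`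
  -- bounds the set, since the set is closed downwards.
  obtain ⟨c, hc, hcy⟩ :=
    hC.isOpen_compl.exists_pos_smul_add_mem (ConvexCone.neg_notMem hCne hq) y
  refine ⟨c⁻¹, fun t ht => not_lt.1 fun hct => hcy (SetLike.mem_coe.2 ?_)⟩
  convert C.smul_mem hc (ConvexCone.sub_smul_mem_of_lt (interior_subset hq) ht hct) using 1
  rw [smul_sub, smul_smul, mul_inv_cancel₀ hc.ne', one_smul, sub_eq_add_neg]

variable (hC : IsClosed (C : Set Y)) (hCne : (C : Set Y) ≠ univ) (hq : q ∈ interior C)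
include hC hCne hq

lemma sub_psi_smul_mem (y : Y) : y - psi C q y • q ∈ C :=
  (hC.preimage (by fun_prop)).csSup_mem (nonempty_setOf_sub_smul_mem hq y)
    (bddAbove_setOf_sub_smul_mem hC hCne hq y)

lemma sub_smul_mem_iff_le_psi {y : Y} {t : ℝ} : y - t • q ∈ C ↔ t ≤ psi C q y := by
  refine ⟨fun h => le_csSup (bddAbove_setOf_sub_smul_mem hC hCne hq y) h, fun h => ?_⟩
  rcases h.eq_or_lt with rfl | hlt
  · exact sub_psi_smul_mem hC hCne hq y
  · exact ConvexCone.sub_smul_mem_of_lt (interior_subset hq) (sub_psi_smul_mem hC hCne hq y) hlt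

lemma sub_smul_mem_interior_iff_lt_psi {y : Y} {t : ℝ} :
    y - t • q ∈ interior C ↔ t < psi C q y := by
  constructor
  · intro h
    obtain ⟨c, hc, hcy⟩ := isOpen_interior.exists_pos_smul_add_mem h (-q)
    have : y - (t + c) • q ∈ C := by
      convert SetLike.mem_coe.1 (interior_subset hcy) using 1
      module
    linarith [(sub_smul_mem_iff_le_psi hC hCne hq).1 this]
  · intro h
    convert ConvexCone.add_mem_interior (ConvexCone.smul_mem_interior (sub_pos.2 h) hq)
      (sub_psi_smul_mem hC hCne hq y) using 1
    module

lemma psi_lt_psi_of_sub_mem_interior {v w : Y} (h : v - w ∈ interior C) :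
    psi C q w < psi C q v := by
  rw [← sub_smul_mem_interior_iff_lt_psi hC hCne hq]
  convert ConvexCone.add_mem_interior h (sub_psi_smul_mem hC hCne hq w) using 1
  abel

variable {X : Type*} {F : X → Set Y}

lemma mem_Colev_iff_psi_le {x : X} {z : Y} (hz : z ∈ F x)
    (hzmin : ∀ w ∈ F x, psi C q z ≤ psi C q w) (lam : ℝ) :
    x ∈ Colev C q F lam ↔ psi C q z ≤ lam := by
  simp only [Colev, mem_ofPred_eq, subset_def, sub_smul_mem_interior_iff_lt_psi hC hCne hq,
    not_forall, not_lt, exists_prop]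
  exact ⟨fun ⟨w, hw, hwl⟩ => (hzmin w hw).trans hwl, fun h => ⟨z, hz, h⟩⟩

lemma psi_lt_of_subset_add_interior {a b : X} {za zb : Y} (hza : za ∈ F a)
    (hzb : ∀ w ∈ F b, psi C q zb ≤ psi C q w) (h : F a ⊆ F b + interior C) :
    psi C q zb < psi C q za := by
  obtain ⟨w, hw, p, hp, rfl⟩ := h hza
  exact (hzb w hw).trans_lt (psi_lt_psi_of_sub_mem_interior hC hCne hq (by simpa using hp))

lemma Mq_lt_coe_iff {g : X → Y} (hg : ∀ x, g x ∈ F x)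
    (hgmin : ∀ x, ∀ w ∈ F x, psi C q (g x) ≤ psi C q w) (r : ℝ) :
    Mq C q F < r ↔ ∃ x, psi C q (g x) < r := by
  have hlb : ∀ t : ℝ, (∀ x, ∀ z ∈ F x, z - t • q ∈ C) ↔ ∀ x, t ≤ psi C q (g x) := fun t =>
    forall_congr' fun x => by
      simp only [sub_smul_mem_iff_le_psi hC hCne hq]
      exact ⟨fun h => h _ (hg x), fun h z hz => h.trans (hgmin x z hz)⟩
  constructor
  · intro h
    by_contra! hr
    exact h.not_ge (le_sSup ⟨r, (hlb r).2 hr, rfl⟩)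
  · rintro ⟨x, hx⟩
    refine lt_of_le_of_lt (sSup_le ?_) (EReal.coe_lt_coe_iff.2 hx)
    rintro _ ⟨t, ht, rfl⟩
    exact EReal.coe_le_coe_iff.2 ((hlb t).1 ht x)

end Topology

lemma Finset.exists_le_forall_lt {X ι : Type*} {m : X → ℝ} {r : ι → ℝ} (s : Finset ι)
    (hr : ∀ i ∈ s, ∃ x, m x < r i) (x₀ : X) : ∃ x, m x ≤ m x₀ ∧ ∀ i ∈ s, m x < r i := by
  classical
  induction s using Finset.induction_on with
  | empty => exact ⟨x₀, le_rfl, by simp⟩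
  | insert a s _ ih =>
    obtain ⟨x, hx₀, hxs⟩ := ih fun i hi => hr i (mem_insert_of_mem hi)
    simp only [Finset.forall_mem_insert]
    by_cases hxa : m x < r a
    · exact ⟨x, hx₀, hxa, hxs⟩
    · obtain ⟨y, hy⟩ := hr a (mem_insert_self a s)
      rw [not_lt] at hxa
      exact ⟨y, by linarith, hy, fun i hi => by linarith [hxs i hi]⟩

lemma exists_forall_le_of_isCompact_of_locally_above_inf {X : Type*} [TopologicalSpace X]
    {m : X → ℝ} {K : Set X} (hK : IsCompact K) {x₀ : X} (hsub : {x | m x < m x₀} ⊆ K)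
    (hloc : ∀ x, (∃ y, m y < m x) → ∃ U ∈ 𝓝 x, ∃ r, (∃ y, m y < r) ∧ ∀ y ∈ U, r < m y) :
    ∃ x, ∀ y, m x ≤ m y := by
  by_contra! hnomin
  choose U hU r hr hUr using fun x => hloc x (hnomin x)
  obtain ⟨t, -, hKt⟩ := hK.elim_nhds_subcover U fun x _ => hU x
  obtain ⟨y₀, hy₀⟩ := hnomin x₀
  obtain ⟨x₁, hx₁, hx₁t⟩ := t.exists_le_forall_lt (fun i _ => hr i) y₀
  obtain ⟨i, hi, hx₁U⟩ := mem_iUnion₂.1 (hKt (hsub (hx₁.trans_lt hy₀)))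
  exact (hUr i x₁ hx₁U).asymm (hx₁t i hi)

theorem stmt15_general {X Y : Type*} [TopologicalSpace X]
    [AddCommGroup Y] [Module ℝ Y] [TopologicalSpace Y]
    [IsTopologicalAddGroup Y] [ContinuousSMul ℝ Y]
    (P : Set Y) (hPclosed : IsClosed P) (hPconv : Convex ℝ P)
    (hPcone : ∀ c : ℝ, 0 < c → ∀ y ∈ P, c • y ∈ P)
    (hPuniv : P ≠ Set.univ)
    (q : Y) (hq : q ∈ interior P)
    (F : X → Set Y)
    (hsrgi : Srgi P q F) (hA : AssumptionA P q F)
    (x₀ : X) (hcpt : IsCompact (closure (ColevB P F (F x₀)))) :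
    ∃ xbar : X, SWEff P F xbar := by
  obtain ⟨C, rfl⟩ : ∃ C : ConvexCone ℝ Y, (C : Set Y) = P :=
    ⟨⟨P, hPcone, fun _ hx _ hy => hPconv.add_mem_of_smul_mem hPcone hx hy⟩, rfl⟩
  choose g hgF hgmin using hA
  have hColev x := mem_Colev_iff_psi_le hPclosed hPuniv hq (hgF x) (hgmin x)
  have hMq := Mq_lt_coe_iff hPclosed hPuniv hq hgF hgmin
  have hdom a b : F a ⊆ F b + interior C → psi C q (g b) < psi C q (g a) :=
    psi_lt_of_subset_add_interior hPclosed hPuniv hq (hgF a) (hgmin b)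
  set m : X → ℝ := fun x => psi C q (g x)
  have hloc x (hx : ∃ y, m y < m x) :
      ∃ U ∈ 𝓝 x, ∃ r, (∃ y, m y < r) ∧ ∀ y ∈ U, r < m y := by
    obtain ⟨y, hy⟩ := hx
    obtain ⟨lam, hylam, hlamx⟩ := exists_between hy
    obtain ⟨U, hU, r, hr, hUr⟩ :=
      hsrgi lam ((hMq lam).2 ⟨y, hylam⟩) x fun hx => ((hColev x lam).1 hx).not_gt hlamx
    refine ⟨U, hU, r, (hMq r).1 hr, fun z hz => not_le.1 fun hzr => ?_⟩
    exact hUr.subset ⟨hz, (hColev z r).2 hzr⟩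
  obtain ⟨xbar, hxbar⟩ := exists_forall_le_of_isCompact_of_locally_above_inf hcpt (x₀ := x₀)
    (fun x hx => subset_closure fun hsub => (hdom x x₀ hsub).not_gt hx) hloc
  exact ⟨xbar, fun ⟨x, _, hsub⟩ => (hdom xbar x hsub).not_ge (hxbar x)⟩

/-- If `F` is `q`-srgi, satisfies assumption (A), `Colev_{<ˡ}(F, F(x₀))` is relatively
compact for some `x₀`, and `F(X)` is `P`-bounded, then `l-SWEff(F)` is nonempty. -/
theorem stmt15 {X Y : Type*} [TopologicalSpace X] [T2Space X]
    [AddCommGroup Y] [Module ℝ Y] [TopologicalSpace Y]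
    [IsTopologicalAddGroup Y] [ContinuousSMul ℝ Y] [T2Space Y]
    (P : Set Y) (hPclosed : IsClosed P) (hPconv : Convex ℝ P)
    (hP0 : (0 : Y) ∈ P) (hPcone : ∀ c : ℝ, 0 < c → ∀ y ∈ P, c • y ∈ P)
    (hPne : P ≠ {0}) (hPuniv : P ≠ Set.univ)
    (q : Y) (hq : q ∈ interior P)
    (F : X → Set Y) (hF : ∀ x, (F x).Nonempty)
    (hsrgi : Srgi P q F) (hA : AssumptionA P q F)
    (x₀ : X) (hcpt : IsCompact (closure (ColevB P F (F x₀))))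
    (hbdd : PBounded P (⋃ x : X, F x)) :
    ∃ xbar : X, SWEff P F xbar :=
  stmt15_general P hPclosed hPconv hPcone hPuniv q hq F hsrgi hA x₀ hcpt
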